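/- arXiv:1909.03469 — 3 statements merged into one kernel-verified Lean document; each statement's English description precedes it below -/
import Mathlib

section
/- For every vector x in ℝ^n (n ≥ 1) and every index i, the i-th absolute row sum of the Jacobian of the softmax function satisfies ∑_{j=1}^n |∂g_i/∂x_j| = 2 e^{x_i} (∑_{j≠i} e^{x_j}) / (∑_{k=1}^n e^{x_k})² ≤ 1; in particular, the ∞-norm of the Jacobian matrix G(x) satisfies ‖G(x)‖_∞ ≤ 1. -/
/-- Row sums of the softmax Jacobian: with `g j = exp (x j) / ∑ k, exp (x k)` and Jacobian
entries `G i j = g i * (δ_{ij} - g j)`, each absolute row sum equals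
`2 e^{x_i} (∑_{j ≠ i} e^{x_j}) / (∑_k e^{x_k})²` and is at most `1`; in particular the
∞-norm of `G(x)` (the maximum absolute row sum) is at most `1`. -/
theorem softmax_jacobian_row_sums (n : ℕ) (hn : 1 ≤ n) (x : Fin n → ℝ) :
    (∀ i : Fin n,
      (∑ j : Fin n,
        |(Real.exp (x i) / ∑ k, Real.exp (x k))
          * ((if i = j then (1 : ℝ) else 0) - Real.exp (x j) / ∑ k, Real.exp (x k))|)
        = 2 * Real.exp (x i) * (∑ j ∈ Finset.univ.erase i, Real.exp (x j))
            / (∑ k, Real.exp (x k)) ^ 2 ∧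
      (∑ j : Fin n,
        |(Real.exp (x i) / ∑ k, Real.exp (x k))
          * ((if i = j then (1 : ℝ) else 0) - Real.exp (x j) / ∑ k, Real.exp (x k))|)
        ≤ 1) ∧
    Finset.univ.sup' (@Finset.univ_nonempty (Fin n) _ (Fin.pos_iff_nonempty.mp hn))
      (fun i => ∑ j : Fin n,
        |(Real.exp (x i) / ∑ k, Real.exp (x k))
          * ((if i = j then (1 : ℝ) else 0) - Real.exp (x j) / ∑ k, Real.exp (x k))|)
      ≤ 1 := by
  have hne : (Finset.univ : Finset (Fin n)).Nonempty :=
    @Finset.univ_nonempty (Fin n) _ (Fin.pos_iff_nonempty.mp hn)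
  set S : ℝ := ∑ k, Real.exp (x k) with hSdef
  have hS : 0 < S := Finset.sum_pos (fun k _ => Real.exp_pos _) hne
  have key : ∀ i : Fin n,
      (∑ j : Fin n, |(Real.exp (x i) / S)
          * ((if i = j then (1 : ℝ) else 0) - Real.exp (x j) / S)|)
        = 2 * Real.exp (x i) * (∑ j ∈ Finset.univ.erase i, Real.exp (x j)) / S ^ 2 := by
    intro i
    set E : ℝ := ∑ j ∈ Finset.univ.erase i, Real.exp (x j) with hEdef
    have hE : Real.exp (x i) + E = S := by
      rw [hEdef, hSdef]
      exact Finset.add_sum_erase _ (fun k => Real.exp (x k)) (Finset.mem_univ i)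
    have hE0 : 0 ≤ E := Finset.sum_nonneg fun j _ => (Real.exp_pos _).le
    rw [← Finset.add_sum_erase _ _ (Finset.mem_univ i)]
    have h1 : |(Real.exp (x i) / S) * ((if i = i then (1 : ℝ) else 0) - Real.exp (x i) / S)|
        = (Real.exp (x i) / S) * (E / S) := by
      rw [if_pos rfl]
      have : (1 : ℝ) - Real.exp (x i) / S = E / S := by
        field_simp; linarith
      rw [this, abs_of_nonneg (by positivity)]
    have h2 : ∑ j ∈ Finset.univ.erase i,
        |(Real.exp (x i) / S) * ((if i = j then (1 : ℝ) else 0) - Real.exp (x j) / S)|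
        = Real.exp (x i) / S * (E / S) := by
      rw [show Real.exp (x i) / S * (E / S)
            = ∑ j ∈ Finset.univ.erase i, Real.exp (x i) / S * (Real.exp (x j) / S) by
          rw [← Finset.mul_sum, hEdef, Finset.sum_div]]
      refine Finset.sum_congr rfl fun j hj => ?_
      rw [if_neg (Ne.symm (Finset.ne_of_mem_erase hj)), zero_sub, mul_neg, abs_neg,
        abs_of_nonneg (by positivity)]
    rw [h1, h2]
    field_simp
    ring
  refine ⟨fun i => ⟨key i, ?_⟩, Finset.sup'_le _ _ fun i _ => ?_⟩ <;>
  · rw [key i]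
    set E : ℝ := ∑ j ∈ Finset.univ.erase i, Real.exp (x j) with hEdef
    have hE : Real.exp (x i) + E = S := by
      rw [hEdef, hSdef]
      exact Finset.add_sum_erase _ (fun k => Real.exp (x k)) (Finset.mem_univ i)
    have hE0 : 0 ≤ E := Finset.sum_nonneg fun j _ => (Real.exp_pos _).le
    rw [div_le_one (by positivity)]
    nlinarith [sq_nonneg (Real.exp (x i) - E)]
end

section
/- Let x ∈ ℝ^n (n ≥ 1) with x ≠ 0 and f(x) ≠ 0, where f(x) = log(∑_{i=1}^n e^{x_i}). Then the ∞-norm relative condition number of log-sum-exp, defined as cond(f,x) = lim_{ε→0} sup_{‖e‖_∞ ≤ ε‖x‖_∞} |f(x+e) − f(x)| / (ε |f(x)|), exists and equals ‖x‖_∞ / |f(x)| = max_i |x_i| / |log(∑_i e^{x_i})|. -/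
open Filter

lemma lse_lipschitz {n : ℕ} [Nonempty (Fin n)] (x e : Fin n → ℝ) :
    |Real.log (∑ i, Real.exp (x i + e i)) - Real.log (∑ i, Real.exp (x i))| ≤ ‖e‖ := by
  have hS : 0 < ∑ i, Real.exp (x i) :=
    Finset.sum_pos (fun i _ => Real.exp_pos _) Finset.univ_nonempty
  have hS' : 0 < ∑ i, Real.exp (x i + e i) :=
    Finset.sum_pos (fun i _ => Real.exp_pos _) Finset.univ_nonempty
  have h1 : (∑ i, Real.exp (x i)) ≤ (∑ i, Real.exp (x i + e i)) * Real.exp ‖e‖ := by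
    rw [Finset.sum_mul]
    apply Finset.sum_le_sum
    intro i _
    rw [← Real.exp_add]
    apply Real.exp_le_exp.mpr
    linarith [abs_le.mp ((Real.norm_eq_abs (e i) ▸ norm_le_pi_norm e i))]
  have h2 : (∑ i, Real.exp (x i + e i)) ≤ (∑ i, Real.exp (x i)) * Real.exp ‖e‖ := by
    rw [Finset.sum_mul]
    apply Finset.sum_le_sum
    intro i _
    rw [← Real.exp_add]
    apply Real.exp_le_exp.mpr
    linarith [abs_le.mp ((Real.norm_eq_abs (e i) ▸ norm_le_pi_norm e i))]
  have l1 : Real.log (∑ i, Real.exp (x i))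
      ≤ Real.log (∑ i, Real.exp (x i + e i)) + ‖e‖ := by
    calc Real.log (∑ i, Real.exp (x i))
        ≤ Real.log ((∑ i, Real.exp (x i + e i)) * Real.exp ‖e‖) := Real.log_le_log hS h1
      _ = Real.log (∑ i, Real.exp (x i + e i)) + ‖e‖ := by
          rw [Real.log_mul hS'.ne' (Real.exp_ne_zero _), Real.log_exp]
  have l2 : Real.log (∑ i, Real.exp (x i + e i))
      ≤ Real.log (∑ i, Real.exp (x i)) + ‖e‖ := by
    calc Real.log (∑ i, Real.exp (x i + e i))
        ≤ Real.log ((∑ i, Real.exp (x i)) * Real.exp ‖e‖) := Real.log_le_log hS' h2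
      _ = Real.log (∑ i, Real.exp (x i)) + ‖e‖ := by
          rw [Real.log_mul hS.ne' (Real.exp_ne_zero _), Real.log_exp]
  rw [abs_le]
  constructor <;> linarith

/-- Condition number of log-sum-exp: for `x : Fin n → ℝ` (`n ≥ 1`) with `x ≠ 0` and
`f x ≠ 0`, where `f x = log (∑ i, exp (x i))`, the quantity
`sup_{‖e‖_∞ ≤ ε ‖x‖_∞} |f (x + e) - f x| / (ε |f x|)` tends, as `ε → 0⁺`, to
`‖x‖_∞ / |f x|`.  (The norm on `Fin n → ℝ` is the sup norm.) -/
theorem logsumexp_condition_number (n : ℕ) (hn : 1 ≤ n) (x : Fin n → ℝ)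
    (hx : x ≠ 0) (hfx : Real.log (∑ i, Real.exp (x i)) ≠ 0) :
    Tendsto
      (fun ε : ℝ =>
        ⨆ e : {e : Fin n → ℝ // ‖e‖ ≤ ε * ‖x‖},
          |Real.log (∑ i, Real.exp (x i + e.1 i)) - Real.log (∑ i, Real.exp (x i))|
            / (ε * |Real.log (∑ i, Real.exp (x i))|))
      (nhdsWithin 0 (Set.Ioi 0))
      (nhds (‖x‖ / |Real.log (∑ i, Real.exp (x i))|)) := by
  have hne : Nonempty (Fin n) := Fin.pos_iff_nonempty.mp hn
  have hS : 0 < ∑ i, Real.exp (x i) :=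
    Finset.sum_pos (fun i _ => Real.exp_pos _) Finset.univ_nonempty
  have hxn : 0 < ‖x‖ := norm_pos_iff.mpr hx
  have hLpos : 0 < |Real.log (∑ i, Real.exp (x i))| := abs_pos.mpr hfx
  apply Tendsto.congr' _ tendsto_const_nhds
  filter_upwards [self_mem_nhdsWithin] with ε hε
  have hε : (0:ℝ) < ε := hε
  have hεx : 0 < ε * ‖x‖ := mul_pos hε hxn
  -- value of the function at any admissible e is ≤ ‖x‖/|L|
  have key : ∀ e : {e : Fin n → ℝ // ‖e‖ ≤ ε * ‖x‖},
      |Real.log (∑ i, Real.exp (x i + e.1 i)) - Real.log (∑ i, Real.exp (x i))|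
        / (ε * |Real.log (∑ i, Real.exp (x i))|)
        ≤ ‖x‖ / |Real.log (∑ i, Real.exp (x i))| := by
    rintro ⟨e, he⟩
    have h1 := (lse_lipschitz x e).trans he
    rw [div_le_div_iff₀ (by positivity) hLpos]
    calc |Real.log (∑ i, Real.exp (x i + e i)) - Real.log (∑ i, Real.exp (x i))|
          * |Real.log (∑ i, Real.exp (x i))|
        ≤ (ε * ‖x‖) * |Real.log (∑ i, Real.exp (x i))| := by
          apply mul_le_mul_of_nonneg_right h1 (abs_nonneg _)
      _ = ‖x‖ * (ε * |Real.log (∑ i, Real.exp (x i))|) := by ring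
  -- witness: the constant vector ε‖x‖
  have hwitnorm : ‖(fun _ : Fin n => ε * ‖x‖)‖ ≤ ε * ‖x‖ := by
    rw [pi_norm_const]
    rw [Real.norm_eq_abs, abs_of_pos hεx]
  have hwitval : |Real.log (∑ i, Real.exp (x i + ε * ‖x‖)) - Real.log (∑ i, Real.exp (x i))|
      / (ε * |Real.log (∑ i, Real.exp (x i))|)
      = ‖x‖ / |Real.log (∑ i, Real.exp (x i))| := by
    have hsum : (∑ i, Real.exp (x i + ε * ‖x‖))
        = (∑ i, Real.exp (x i)) * Real.exp (ε * ‖x‖) := by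
      rw [Finset.sum_mul]
      exact Finset.sum_congr rfl fun i _ => Real.exp_add _ _
    rw [hsum, Real.log_mul hS.ne' (Real.exp_ne_zero _), Real.log_exp,
      add_sub_cancel_left, abs_of_pos hεx, mul_div_mul_left _ _ hε.ne']
  haveI : Nonempty {e : Fin n → ℝ // ‖e‖ ≤ ε * ‖x‖} := ⟨⟨0, by rw [norm_zero]; exact hεx.le⟩⟩
  symm
  apply le_antisymm
  · exact ciSup_le key
  · exact le_ciSup_of_le ⟨‖x‖ / |Real.log (∑ i, Real.exp (x i))|,
      Set.forall_mem_range.mpr key⟩ ⟨fun _ => ε * ‖x‖, hwitnorm⟩ hwitval.ge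
end

section
/- The softmax function g on ℝ^n (n ≥ 1) is 1-Lipschitz from the ∞-norm to the ∞-norm: for all x, e ∈ ℝ^n, ‖g(x + e) − g(x)‖_∞ ≤ ‖e‖_∞. -/
/-!
Along the segment `t ↦ x + t • e`, the `j`-th coordinate `p j` of softmax has derivative
`p j * (e j - ∑ k, p k * e k) = p j * ∑ k ≠ j, p k * (e j - e k)`, of absolute value at most
`2 * p j * (1 - p j) * ‖e‖ ≤ ‖e‖ / 2`. The mean value theorem then gives the bound with
constant `1 / 2`.
-/

open Real Finset

noncomputable def softmax {ι : Type*} [Fintype ι] (x : ι → ℝ) : ι → ℝ :=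
  fun j => exp (x j) / ∑ i, exp (x i)

section

variable {ι : Type*} [Fintype ι]

theorem softmax_nonneg (x : ι → ℝ) (j : ι) : 0 ≤ softmax x j := by
  unfold softmax; positivity

theorem sum_softmax [Nonempty ι] (x : ι → ℝ) : ∑ j, softmax x j = 1 := by
  have hS : 0 < ∑ i, exp (x i) := sum_pos (fun i _ => exp_pos (x i)) univ_nonempty
  simp only [softmax, ← sum_div, div_self hS.ne']

theorem abs_sub_sum_mul_le {p v : ι → ℝ} {c : ℝ} (hp : ∀ k, 0 ≤ p k) (hp₁ : ∑ k, p k = 1)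
    (j : ι) (hv : ∀ k, |v j - v k| ≤ c) : |v j - ∑ k, p k * v k| ≤ (1 - p j) * c := by
  classical
  have hsplit : v j - ∑ k, p k * v k = ∑ k ∈ univ.erase j, p k * (v j - v k) := by
    rw [sum_erase _ (by simp)]
    simp only [mul_sub, sum_sub_distrib, ← sum_mul, hp₁, one_mul]
  calc |v j - ∑ k, p k * v k| ≤ ∑ k ∈ univ.erase j, |p k * (v j - v k)| := by
        rw [hsplit]; exact abs_sum_le_sum_abs _ _
    _ ≤ ∑ k ∈ univ.erase j, p k * c := by
        refine sum_le_sum fun k _ => ?_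
        rw [abs_mul, abs_of_nonneg (hp k)]
        exact mul_le_mul_of_nonneg_left (hv k) (hp k)
    _ = (1 - p j) * c := by rw [← sum_mul, sum_erase_eq_sub (mem_univ j), hp₁]

theorem hasDerivAt_softmax_add_smul (x e : ι → ℝ) (j : ι) (s : ℝ) :
    HasDerivAt (fun t : ℝ => softmax (x + t • e) j)
      (softmax (x + s • e) j * (e j - ∑ k, softmax (x + s • e) k * e k)) s := by
  have hexp : ∀ i, HasDerivAt (fun t : ℝ => exp (x i + t * e i)) (exp (x i + s * e i) * e i) s :=
    fun i => by simpa using ((hasDerivAt_mul_const (e i)).const_add (x i)).exp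
  have hS : 0 < ∑ i, exp (x i + s * e i) := sum_pos (fun i _ => exp_pos _) ⟨j, mem_univ j⟩
  refine ((hexp j).fun_div (HasDerivAt.fun_sum fun i _ => hexp i) hS.ne').congr_deriv ?_
  simp only [softmax, Pi.add_apply, Pi.smul_apply, smul_eq_mul, div_mul_eq_mul_div, ← sum_div]
  field_simp

theorem abs_softmax_add_sub_le (x e : ι → ℝ) (j : ι) :
    |softmax (x + e) j - softmax x j| ≤ ‖e‖ / 2 := by
  have : Nonempty ι := ⟨j⟩
  have he : ∀ k, |e j - e k| ≤ 2 * ‖e‖ := fun k => by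
    have := abs_sub (e j) (e k)
    have hj := norm_le_pi_norm e j
    have hk := norm_le_pi_norm e k
    rw [Real.norm_eq_abs] at hj hk
    linarith
  have hbound : ∀ s : ℝ,
      |softmax (x + s • e) j * (e j - ∑ k, softmax (x + s • e) k * e k)| ≤ ‖e‖ / 2 := by
    intro s
    set p := softmax (x + s • e)
    have hp : 0 ≤ p j := softmax_nonneg _ j
    calc |p j * (e j - ∑ k, p k * e k)| = p j * |e j - ∑ k, p k * e k| := by
          rw [abs_mul, abs_of_nonneg hp]
      _ ≤ p j * ((1 - p j) * (2 * ‖e‖)) :=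
          mul_le_mul_of_nonneg_left
            (abs_sub_sum_mul_le (softmax_nonneg _) (sum_softmax _) j he) hp
      _ ≤ ‖e‖ / 2 := by nlinarith [mul_nonneg (norm_nonneg e) (sq_nonneg (p j - 1 / 2))]
  simpa using norm_image_sub_le_of_norm_deriv_le_segment_01'
    (f := fun t : ℝ => softmax (x + t • e) j)
    (fun s _ => (hasDerivAt_softmax_add_smul x e j s).hasDerivWithinAt) (fun s _ => hbound s)

theorem norm_softmax_add_sub_le (x e : ι → ℝ) : ‖softmax (x + e) - softmax x‖ ≤ ‖e‖ / 2 :=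
  (pi_norm_le_iff_of_nonneg (by positivity)).2 fun j => abs_softmax_add_sub_le x e j

end

theorem softmax_lipschitz_general (n : ℕ) (x e : Fin n → ℝ) :
    ‖(fun j => Real.exp (x j + e j) / ∑ i, Real.exp (x i + e i))
        - (fun j => Real.exp (x j) / ∑ i, Real.exp (x i))‖ ≤ ‖e‖ :=
  (norm_softmax_add_sub_le x e).trans (half_le_self (norm_nonneg e))

/-- The softmax function `g x = fun j => exp (x j) / ∑ i, exp (x i)` on `Fin n → ℝ`
(`n ≥ 1`) is `1`-Lipschitz from the ∞-norm to the ∞-norm: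
`‖g (x + e) - g x‖_∞ ≤ ‖e‖_∞`. (The norm on `Fin n → ℝ` is the sup norm.) -/
theorem softmax_lipschitz (n : ℕ) (hn : 1 ≤ n) (x e : Fin n → ℝ) :
    ‖(fun j => Real.exp (x j + e j) / ∑ i, Real.exp (x i + e i))
        - (fun j => Real.exp (x j) / ∑ i, Real.exp (x i))‖ ≤ ‖e‖ :=
  softmax_lipschitz_general n x e
end
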